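/- arXiv:1602.06631 — 2 statements merged into one kernel-verified Lean document; each statement's English description precedes it below -/
import Mathlib

section
/- Let (A, M) be a Schur pair and S = End_A(M). Then the opposite algebra A^op is isomorphic to End_S(M), where M is viewed as a left S-module. (Double centraliser property.) -/
/-!
Choosing a `K`-spanning family `b₁, …, bₙ` of the faithful module `M`, the orbit map
`a ↦ (a • bᵢ)ᵢ` embeds `Aᵐᵒᵖ` into `Mⁿ`; self-injectivity splits this embedding by some
`π : Mⁿ → Aᵐᵒᵖ`. An `End_A(M)`-linear `φ : M → M` commutes with every `A`-linear map `Mⁿ → M`,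
since such a map is a sum of endomorphisms of `M`; applied to `p ↦ π p • x` at the point
`(bᵢ)ᵢ`, this shows that `φ` is the action of `π (φ bᵢ)ᵢ`.
-/

open Module

section

variable {R M : Type*} [Ring R] [AddCommGroup M] [Module R M]

theorem Module.exists_injective_linearMap_fin_pi_of_faithfulSMul (K : Type*) [Semiring K]
    [Module K M] [SMulCommClass R K M] [Module.Finite K M] [FaithfulSMul R M] :
    ∃ (n : ℕ) (f : R →ₗ[R] (Fin n → M)), Function.Injective f := by
  obtain ⟨n, b, hb⟩ := Module.Finite.exists_fin (R := K) (M := M)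
  refine ⟨n, LinearMap.pi fun i => LinearMap.toSpanSingleton R M (b i), fun r r' h => ?_⟩
  have : DistribSMul.toLinearMap K M r = DistribSMul.toLinearMap K M r' :=
    LinearMap.ext_on_range hb fun i => congr_fun h i
  exact FaithfulSMul.eq_of_smul_eq_smul fun x => LinearMap.congr_fun this x

theorem Module.toModuleEnd_moduleEnd_injective [FaithfulSMul R M] :
    Function.Injective (Module.toModuleEnd (End R M) (S := R) M) := fun _ _ h =>
  FaithfulSMul.eq_of_smul_eq_smul fun x => LinearMap.congr_fun h x

theorem Module.End.apply_linearMap_pi_eq {ι : Type*} [Fintype ι] [DecidableEq ι]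
    (φ : End (End R M) M) (T : (ι → M) →ₗ[R] M) (p : ι → M) :
    φ (T p) = T (φ ∘ p) := by
  conv_lhs => rw [← Finset.univ_sum_single p]
  rw [← Finset.univ_sum_single (φ ∘ p)]
  simp only [map_sum]
  exact Finset.sum_congr rfl fun i _ =>
    φ.map_smul (T ∘ₗ LinearMap.single R (fun _ => M) i) (p i)

theorem Module.toModuleEnd_moduleEnd_surjective_of_apply_eq_one {ι : Type*} [Finite ι]
    (π : (ι → M) →ₗ[R] R) (b : ι → M) (hb : π b = 1) :
    Function.Surjective (Module.toModuleEnd (End R M) (S := R) M) := by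
  classical
  have := Fintype.ofFinite ι
  intro φ
  refine ⟨π (φ ∘ b), LinearMap.ext fun x => ?_⟩
  calc π (φ ∘ b) • x = (LinearMap.toSpanSingleton R M x ∘ₗ π) (φ ∘ b) := rfl
    _ = φ ((LinearMap.toSpanSingleton R M x ∘ₗ π) b) := (φ.apply_linearMap_pi_eq _ b).symm
    _ = φ x := by simp [hb]

end

theorem double_centraliser_general
    (K A M : Type) [Field K] [Ring A] [Algebra K A]
    [AddCommGroup M] [Module Aᵐᵒᵖ M] [Module K M] [IsScalarTower K Aᵐᵒᵖ M]
    [FiniteDimensional K M] [FaithfulSMul Aᵐᵒᵖ M]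
    (hA : Module.Injective Aᵐᵒᵖ A) :
    Nonempty (Aᵐᵒᵖ ≃+* Module.End (Module.End Aᵐᵒᵖ M) M) := by
  obtain ⟨n, f, hf⟩ :=
    Module.exists_injective_linearMap_fin_pi_of_faithfulSMul (R := Aᵐᵒᵖ) (M := M) K
  let e : A ≃ₗ[Aᵐᵒᵖ] Aᵐᵒᵖ := MulOpposite.opLinearEquiv Aᵐᵒᵖ
  obtain ⟨π, hπ⟩ := Module.Injective.extension_property Aᵐᵒᵖ A _ _ f hf e.symm.toLinearMap
  have hsplit : (e.toLinearMap ∘ₗ π) (f 1) = 1 := by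
    simp only [LinearMap.comp_apply, ← LinearMap.comp_apply π f, hπ]
    exact e.apply_symm_apply 1
  exact ⟨RingEquiv.ofBijective _ ⟨Module.toModuleEnd_moduleEnd_injective,
    Module.toModuleEnd_moduleEnd_surjective_of_apply_eq_one _ _ hsplit⟩⟩

/-- **Double centraliser property.** Let `(A, M)` be a Schur pair and
`S = End_A(M)`.  Then `A^op ≅ End_S(M)`, where `M` is viewed as a left `S`-module by
evaluation.  (Right `A`-modules are modelled as `Aᵐᵒᵖ`-modules, so `A^op = Aᵐᵒᵖ`.) -/
theorem double_centraliser
    (K A M : Type) [Field K] [Ring A] [Algebra K A] [FiniteDimensional K A]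
    [AddCommGroup M] [Module Aᵐᵒᵖ M] [Module K M] [IsScalarTower K Aᵐᵒᵖ M]
    [FiniteDimensional K M] [FaithfulSMul Aᵐᵒᵖ M]
    (hA : Module.Injective Aᵐᵒᵖ A) :
    Nonempty (Aᵐᵒᵖ ≃+* Module.End (Module.End Aᵐᵒᵖ M) M) :=
  double_centraliser_general K A M hA
end

section
/- Let (A, M) be a Schur pair with S = End_A(M). Then M is projective as a left S-module. -/
/-!
For `m₁, …, mₙ` spanning the faithful module `M` over `K`, the map `a ↦ (m₁ a, …, mₙ a)` embeds
`A` into `Mⁿ`, and since `A` is self-injective this embedding splits. Applying `Hom_A(-, M)`,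
which turns the `A`-module structure into an `S`-module structure, exhibits `M ≅ Hom_A(A, M)`
as a direct summand of `Hom_A(Mⁿ, M) ≅ Sⁿ`.
-/

open Module LinearMap

universe v

def MulOpposite.opLinearEquivSelf (R : Type*) [Semiring R] : R ≃ₗ[Rᵐᵒᵖ] Rᵐᵒᵖ where
  toAddEquiv := MulOpposite.opAddEquiv
  map_smul' _ _ := rfl

section

variable {R M : Type*} [Ring R] [AddCommGroup M] [Module R M]

theorem FaithfulSMul.exists_injective_pi_toSpanSingleton (K : Type*) [Semiring K] [Module K M]
    [SMulCommClass R K M] [Module.Finite K M] [FaithfulSMul R M] :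
    ∃ (n : ℕ) (v : Fin n → M),
      Function.Injective (pi fun j ↦ toSpanSingleton R M (v j)) := by
  obtain ⟨n, v, hv⟩ := Finite.exists_fin (R := K) (M := M)
  refine ⟨n, v, (injective_iff_map_eq_zero _).2 fun r hr ↦ ?_⟩
  have hr : DistribSMul.toLinearMap K M r = 0 := ext_on_range hv fun j ↦ congr_fun hr j
  exact FaithfulSMul.eq_of_smul_eq_smul (α := M) fun m ↦ by
    simpa using LinearMap.congr_fun hr m

theorem Module.Projective.linearMap_of_retract {N P S : Type*} [AddCommGroup N] [AddCommGroup P]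
    [Module R N] [Module R P] [Semiring S] [Module S M] [SMulCommClass R S M]
    [Projective S (P →ₗ[R] M)] (i : N →ₗ[R] P) (r : P →ₗ[R] N)
    (hri : r ∘ₗ i = LinearMap.id) :
    Projective S (N →ₗ[R] M) :=
  .of_split (lcomp S M r) (lcomp S M i) <| by
    ext f x
    simp [← comp_apply r i, hri]

instance Module.Projective.linearMap_pi_self {ι : Type*} [Finite ι] :
    Projective (Module.End R M) ((ι → M) →ₗ[R] M) := by
  classical
  have := Fintype.ofFinite ι
  exact .of_equiv' (lsum R (fun _ : ι ↦ M) (Module.End R M))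

theorem Module.projective_end_linearMap_of_injective {N : Type v} [AddCommGroup N] [Module R N]
    [Small.{v} R] [Module.Injective R N] {ι : Type*} [Finite ι] (f : N →ₗ[R] ι → M)
    (hf : Function.Injective f) : Projective (Module.End R M) (N →ₗ[R] M) := by
  obtain ⟨r, hr⟩ := Injective.extension_property R N _ _ f hf LinearMap.id
  exact .linearMap_of_retract f r hr

end

theorem tensor_space_projective_general
    (K A M : Type) [Field K] [Ring A] [Algebra K A]
    [AddCommGroup M] [Module Aᵐᵒᵖ M] [Module K M] [IsScalarTower K Aᵐᵒᵖ M]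
    [FiniteDimensional K M] [FaithfulSMul Aᵐᵒᵖ M]
    (hA : Module.Injective Aᵐᵒᵖ A) :
    Module.Projective (Module.End Aᵐᵒᵖ M) M := by
  let S := Module.End Aᵐᵒᵖ M
  let e := MulOpposite.opLinearEquivSelf A
  obtain ⟨n, v, hv⟩ :=
    FaithfulSMul.exists_injective_pi_toSpanSingleton (R := Aᵐᵒᵖ) (M := M) K
  have : Projective S (A →ₗ[Aᵐᵒᵖ] M) :=
    projective_end_linearMap_of_injective
      ((pi fun j ↦ toSpanSingleton Aᵐᵒᵖ M (v j)) ∘ₗ e.toLinearMap) (hv.comp e.injective)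
  exact .of_equiv' ((LinearEquiv.congrLeft M S e).trans (ringLmapEquivSelf Aᵐᵒᵖ S M))

/-- Let `(A, M)` be a Schur pair with `S = End_A(M)`.  Then `M` is
projective as a left `S`-module (with `S` acting by evaluation).  (Right `A`-modules are
modelled as `Aᵐᵒᵖ`-modules.) -/
theorem tensor_space_projective
    (K A M : Type) [Field K] [Ring A] [Algebra K A] [FiniteDimensional K A]
    [AddCommGroup M] [Module Aᵐᵒᵖ M] [Module K M] [IsScalarTower K Aᵐᵒᵖ M]
    [FiniteDimensional K M] [FaithfulSMul Aᵐᵒᵖ M]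
    (hA : Module.Injective Aᵐᵒᵖ A) :
    Module.Projective (Module.End Aᵐᵒᵖ M) M :=
  tensor_space_projective_general K A M hA
end
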